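/- arXiv:0805.3856 — 3 statements merged into one kernel-verified Lean document; each statement's English description precedes it below -/
import Mathlib

section
/- Fix an integer l ≥ 1 and let u(t) = (x − t² − tl)^l for a large real parameter x. Then ∫_0^{√x} u(t) dt = ((l!)²·2^{2l}/(2l+1)!)·x^{l+1/2} − (l/2)·x^l + O(x^{l−1/2}), where the implied constant depends only on l. -/
/-!
Write the integrand as `(a + b) ^ l` with `a = x - t²` and `b = -t l`. The two leading binomial
terms integrate exactly: `∫₀^√x (x - t²) ^ l dt = c_l x ^ l √x`, where integrating
`t · t (x - t²) ^ l` by parts gives `c_{l+1} = (2l + 2) / (2l + 3) · c_l`, and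
`∫₀^√x l a ^ (l - 1) b dt = -(l / 2) x ^ l`. Every other binomial term carries `b` to a power at
least `2`; as `|a| ≤ x` and `|b| ≤ l √x ≤ x`, each is `O(x ^ (l - 1))`, and the interval has
length `√x`.
-/

open Finset Real intervalIntegral

theorem add_pow_succ_sub_sub {R : Type*} [CommRing R] (a b : R) (n : ℕ) :
    (a + b) ^ (n + 1) - a ^ (n + 1) - (n + 1) * a ^ n * b =
      ∑ k ∈ range n, a ^ k * b ^ (n + 1 - k) * (n + 1).choose k := by
  rw [add_pow, sum_range_succ, sum_range_succ]
  simp only [Nat.choose_succ_self_right, Nat.choose_self, Nat.add_sub_cancel_left, Nat.sub_self]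
  push_cast
  ring

theorem abs_add_pow_succ_sub_sub_le {a b A B : ℝ} (n : ℕ) (hA : 0 < A) (ha : |a| ≤ A)
    (hb : |b| ≤ B) (hBA : B ≤ A) :
    |(a + b) ^ (n + 1) - a ^ (n + 1) - (n + 1) * a ^ n * b| ≤
      2 ^ (n + 1) * A ^ (n + 1) * (B / A) ^ 2 := by
  have hB : 0 ≤ B := (abs_nonneg b).trans hb
  have hq₀ : 0 ≤ B / A := div_nonneg hB hA.le
  have hq₁ : B / A ≤ 1 := (div_le_one hA).2 hBA
  have hterm : ∀ k ∈ range n, |a ^ k * b ^ (n + 1 - k) * ((n + 1).choose k : ℝ)| ≤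
      A ^ (n + 1) * (B / A) ^ 2 * (n + 1).choose k := by
    intro k hk
    have hkn : 2 ≤ n + 1 - k := by have := mem_range.1 hk; omega
    have hBpow : B ^ (n + 1 - k) ≤ A ^ (n + 1 - k) * (B / A) ^ 2 := calc
      B ^ (n + 1 - k) = A ^ (n + 1 - k) * (B / A) ^ (n + 1 - k) := by
        rw [div_pow, mul_div_cancel₀ _ (pow_pos hA _).ne']
      _ ≤ A ^ (n + 1 - k) * (B / A) ^ 2 :=
        mul_le_mul_of_nonneg_left (pow_le_pow_of_le_one hq₀ hq₁ hkn) (pow_nonneg hA.le _)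
    calc |a ^ k * b ^ (n + 1 - k) * ((n + 1).choose k : ℝ)|
        = |a| ^ k * |b| ^ (n + 1 - k) * (n + 1).choose k := by
          rw [abs_mul, abs_mul, abs_pow, abs_pow, Nat.abs_cast]
      _ ≤ A ^ k * (A ^ (n + 1 - k) * (B / A) ^ 2) * (n + 1).choose k := by
          gcongr
          exact (pow_le_pow_left₀ (abs_nonneg b) hb _).trans hBpow
      _ = A ^ (n + 1) * (B / A) ^ 2 * (n + 1).choose k := by
          rw [← mul_assoc, ← pow_add, Nat.add_sub_cancel' (mem_range.1 hk).le.step]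
  calc |(a + b) ^ (n + 1) - a ^ (n + 1) - (n + 1) * a ^ n * b|
      ≤ ∑ k ∈ range n, A ^ (n + 1) * (B / A) ^ 2 * (n + 1).choose k := by
        rw [add_pow_succ_sub_sub]
        exact (abs_sum_le_sum_abs _ _).trans (sum_le_sum hterm)
    _ ≤ ∑ k ∈ range (n + 1 + 1), A ^ (n + 1) * (B / A) ^ 2 * (n + 1).choose k :=
        sum_le_sum_of_subset_of_nonneg (range_mono (by omega)) (fun _ _ _ => by positivity)
    _ = 2 ^ (n + 1) * A ^ (n + 1) * (B / A) ^ 2 := by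
        rw [← mul_sum, ← Nat.cast_sum, Nat.sum_range_choose]
        push_cast
        ring

theorem hasDerivAt_sub_sq_pow_succ (x t : ℝ) (n : ℕ) :
    HasDerivAt (fun t => (x - t ^ 2) ^ (n + 1)) (-(2 * (n + 1) * t * (x - t ^ 2) ^ n)) t := by
  refine (((hasDerivAt_pow 2 t).const_sub x).fun_pow (n + 1)).congr_deriv ?_
  push_cast
  ring

theorem integral_mul_sub_sq_pow {x : ℝ} (hx : 0 ≤ x) (n : ℕ) :
    ∫ t in (0 : ℝ)..√x, t * (x - t ^ 2) ^ n = x ^ (n + 1) / (2 * (n + 1)) := by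
  have hderiv : ∀ t ∈ Set.uIcc 0 √x,
      HasDerivAt (fun t => -(x - t ^ 2) ^ (n + 1) / (2 * (n + 1))) (t * (x - t ^ 2) ^ n) t := by
    intro t _
    refine ((hasDerivAt_sub_sq_pow_succ x t n).neg.div_const (2 * (n + 1) : ℝ)).congr_deriv ?_
    field_simp
  rw [integral_eq_sub_of_hasDerivAt hderiv (by apply Continuous.intervalIntegrable; fun_prop),
    sq_sqrt hx]
  simp [neg_div]

theorem integral_sub_sq_pow_succ {x : ℝ} (hx : 0 ≤ x) (n : ℕ) :
    ∫ t in (0 : ℝ)..√x, (x - t ^ 2) ^ (n + 1) =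
      (2 * n + 2) / (2 * n + 3) * x * ∫ t in (0 : ℝ)..√x, (x - t ^ 2) ^ n := by
  set J := ∫ t in (0 : ℝ)..√x, t ^ 2 * (x - t ^ 2) ^ n
  have hsplit : ∫ t in (0 : ℝ)..√x, (x - t ^ 2) ^ (n + 1) =
      x * (∫ t in (0 : ℝ)..√x, (x - t ^ 2) ^ n) - J := by
    rw [← intervalIntegral.integral_const_mul,
      ← integral_sub (by apply Continuous.intervalIntegrable; fun_prop)
        (by apply Continuous.intervalIntegrable; fun_prop)]
    congr 1 with t
    ring
  have hparts : ∫ t in (0 : ℝ)..√x, (x - t ^ 2) ^ (n + 1) = 2 * (n + 1) * J := by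
    have := integral_mul_deriv_eq_deriv_mul (a := 0) (b := √x)
      (fun t _ => hasDerivAt_id t) (fun t _ => hasDerivAt_sub_sq_pow_succ x t n)
      (by apply Continuous.intervalIntegrable; fun_prop)
      (by apply Continuous.intervalIntegrable; fun_prop)
    have hlhs : ∫ t in (0 : ℝ)..√x, t * -(2 * (n + 1) * t * (x - t ^ 2) ^ n) =
        -(2 * (n + 1)) * J := by
      rw [← intervalIntegral.integral_const_mul]
      congr 1 with t
      ring
    simp only [id, one_mul, sq_sqrt hx, sub_self, hlhs] at this
    simp at this
    linarith
  rw [hsplit] at hparts ⊢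
  field_simp
  linear_combination hparts

theorem integral_sub_sq_pow {x : ℝ} (hx : 0 ≤ x) (n : ℕ) :
    ∫ t in (0 : ℝ)..√x, (x - t ^ 2) ^ n =
      (n.factorial : ℝ) ^ 2 * 2 ^ (2 * n) / (2 * n + 1).factorial * (x ^ n * √x) := by
  induction n with
  | zero => simp
  | succ n ih =>
    rw [integral_sub_sq_pow_succ hx, ih, show 2 * (n + 1) + 1 = 2 * n + 1 + 1 + 1 by ring]
    push_cast [Nat.factorial_succ]
    field_simp
    ring

theorem Real.rpow_natCast_add_half {x : ℝ} (hx : 0 < x) (n : ℕ) :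
    x ^ ((n : ℝ) + 1 / 2) = x ^ n * √x := by
  rw [rpow_add hx, rpow_natCast, sqrt_eq_rpow]

theorem integral_sub_sq_sub_mul_pow_sub {x : ℝ} (hx : 0 ≤ x) (n : ℕ) :
    (∫ t in (0 : ℝ)..√x, (x - t ^ 2 - t * (n + 1)) ^ (n + 1)) -
        ((n + 1).factorial ^ 2 * 2 ^ (2 * (n + 1)) / (2 * (n + 1) + 1).factorial *
          (x ^ (n + 1) * √x) - (n + 1) / 2 * x ^ (n + 1)) =
      ∫ t in (0 : ℝ)..√x, ((x - t ^ 2 - t * (n + 1)) ^ (n + 1) - (x - t ^ 2) ^ (n + 1) +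
        (n + 1) ^ 2 * (t * (x - t ^ 2) ^ n)) := by
  rw [integral_add, integral_sub, intervalIntegral.integral_const_mul, integral_sub_sq_pow hx,
    integral_mul_sub_sq_pow hx]
  · generalize ∫ t in (0 : ℝ)..√x, (x - t ^ 2 - t * (n + 1)) ^ (n + 1) = I
    field_simp
    ring
  all_goals exact Continuous.intervalIntegrable (by fun_prop) _ _

theorem abs_sub_sq_sub_mul_pow_sub_le {x t : ℝ} (n : ℕ) (hx : ((n : ℝ) + 1) ^ 2 ≤ x)
    (ht₀ : 0 ≤ t) (ht : t ≤ √x) :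
    |(x - t ^ 2 - t * (n + 1)) ^ (n + 1) - (x - t ^ 2) ^ (n + 1) +
        (n + 1) ^ 2 * (t * (x - t ^ 2) ^ n)| ≤ 2 ^ (n + 1) * (n + 1) ^ 2 * x ^ n := by
  have hx₀ : 0 < x := lt_of_lt_of_le (by positivity) hx
  have hsqrt : (n + 1) * √x ≤ x := by
    have : (n + 1 : ℝ) ≤ √x := le_sqrt_of_sq_le hx
    nlinarith [mul_self_sqrt hx₀.le, sqrt_nonneg x]
  have ht2 : t ^ 2 ≤ x := (pow_le_pow_left₀ ht₀ ht 2).trans (sq_sqrt hx₀.le).le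
  have ha : |x - t ^ 2| ≤ x := abs_le.2 ⟨by nlinarith, by nlinarith⟩
  have hb : |-(t * (n + 1))| ≤ (n + 1) * √x := by
    rw [abs_neg, abs_of_nonneg (by positivity), mul_comm]
    gcongr
  have := abs_add_pow_succ_sub_sub_le n hx₀ ha hb hsqrt
  rw [div_pow, mul_pow, sq_sqrt hx₀.le] at this
  convert this using 1
  · congr 1
    ring
  · field_simp
    ring

/-- `∫_0^{√x} (x − t² − tl)^l dt = ((l!)² 2^{2l}/(2l+1)!) x^{l+1/2} − (l/2) x^l + O(x^{l−1/2})`. -/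
theorem integral_u_asymptotic (l : ℕ) (hl : 1 ≤ l) :
    ∃ C x₀ : ℝ, 0 < C ∧ 1 ≤ x₀ ∧ ∀ x : ℝ, x₀ ≤ x →
      |(∫ t in (0:ℝ)..Real.sqrt x, (x - t ^ 2 - t * l) ^ l) -
        (((l.factorial : ℝ) ^ 2 * 2 ^ (2 * l) / ((2 * l + 1).factorial : ℝ)) *
            x ^ ((l : ℝ) + 1/2) - (l / 2 : ℝ) * x ^ (l : ℕ))|
        ≤ C * x ^ ((l : ℝ) - 1/2) := by
  obtain ⟨n, rfl⟩ := Nat.exists_eq_add_of_le' hl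
  refine ⟨2 ^ (n + 1) * (n + 1) ^ 2, (n + 1) ^ 2, by positivity,
    one_le_pow₀ (le_add_of_nonneg_left n.cast_nonneg), fun x hx => ?_⟩
  have hx₀ : 0 < x := lt_of_lt_of_le (by positivity) hx
  have hrpow₁ : x ^ ((n : ℝ) + 1 + 1 / 2) = x ^ (n + 1) * √x := by
    exact_mod_cast rpow_natCast_add_half hx₀ (n + 1)
  have hrpow₂ : x ^ ((n : ℝ) + 1 - 1 / 2) = x ^ n * √x := by
    rw [← rpow_natCast_add_half hx₀]
    ring_nf
  push_cast
  rw [hrpow₁, hrpow₂, integral_sub_sq_sub_mul_pow_sub hx₀.le]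
  refine (norm_integral_le_of_norm_le_const (E := ℝ)
    (C := 2 ^ (n + 1) * (n + 1) ^ 2 * x ^ n) fun t ht => ?_).trans_eq ?_
  · rw [Set.uIoc_of_le (sqrt_nonneg x)] at ht
    exact abs_sub_sq_sub_mul_pow_sub_le n hx ht.1.le ht.2
  · rw [sub_zero, abs_of_nonneg (sqrt_nonneg x)]
    ring
end

section
/- Fix an integer l ≥ 2. For large real x, ∑_{1 ≤ m ≤ √x} m^l·(x/(2m) − m/2 − l/2)^{l−1} = x^l/(2^l · l) + O(x^{l−1/2}), with implied constant depending only on l. -/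
open Real Finset

/-!
Write `a(m) = x - m (m + l)`, so that the `m`-th term is `m a(m)^(l-1) / 2^(l-1)`. Since
`a(m) - a(m+1) = 2m + l + 1`, the weight `2m` is the step `a(m) - a(m+1)` minus `l + 1`. The sum
`l ∑ (a(m) - a(m+1)) a(m)^(l-1)` is a Riemann sum for `∫ l t^(l-1) dt`: it telescopes to
`a(1)^l - a(N+1)^l` up to `O(step² x^(l-2)) = O(x^(l-1))` per term, hence `O(x^(l-1/2))` over the
`N = ⌊√x⌋` terms; this per-term bound needs only `|a(m)| ≤ x`, not `a(m) ≥ 0`, so the last few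
terms, where `a(m)` may be negative, need no separate treatment. Finally
`a(1)^l = x^l + O(x^(l-1))`, `a(N+1) = O(√x)`, and the remaining `(l+1) ∑ a(m)^(l-1)` is
`O(√x · x^(l-1))`.
-/

section Telescoping

variable {α : Type*} [CommRing α] [LinearOrder α] [IsStrictOrderedRing α]

theorem abs_mul_sub_mul_pow_sub_sub_pow_le (n : ℕ) {a b X : α}
    (ha : |a| ≤ X) (hb : |b| ≤ X) :
    |(n + 2) * (a - b) * a ^ (n + 1) - (a ^ (n + 2) - b ^ (n + 2))| ≤
      (n + 2) ^ 2 * (a - b) ^ 2 * X ^ n := by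
  have hX : 0 ≤ X := (abs_nonneg a).trans ha
  induction n with
  | zero =>
    have h : (2 : α) * (a - b) * a - (a ^ 2 - b ^ 2) = (a - b) ^ 2 := by ring
    norm_num [h]
    nlinarith [sq_nonneg (a - b)]
  | succ n ih =>
    have hpow : |a ^ (n + 2) - b ^ (n + 2)| ≤ |a - b| * (n + 2 : ℕ) * X ^ (n + 1) :=
      (abs_pow_sub_pow_le ..).trans
        (by gcongr; exact pow_le_pow_left₀ (by positivity) (max_le ha hb) _)
    calc _ = |a * ((n + 2) * (a - b) * a ^ (n + 1) - (a ^ (n + 2) - b ^ (n + 2)))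
          + (a - b) * (a ^ (n + 2) - b ^ (n + 2))| := by push_cast; ring_nf
      _ ≤ |a| * |(n + 2) * (a - b) * a ^ (n + 1) - (a ^ (n + 2) - b ^ (n + 2))|
          + |a - b| * |a ^ (n + 2) - b ^ (n + 2)| := by
        rw [← abs_mul, ← abs_mul]; exact abs_add_le _ _
      _ ≤ X * ((n + 2) ^ 2 * (a - b) ^ 2 * X ^ n)
          + |a - b| * (|a - b| * (n + 2 : ℕ) * X ^ (n + 1)) := by gcongr
      _ = ((n + 2) ^ 2 + (n + 2)) * (a - b) ^ 2 * X ^ (n + 1) := by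
        rw [pow_succ X n, ← sq_abs (a - b)]; push_cast; ring
      _ ≤ _ := by push_cast; gcongr; nlinarith

theorem abs_mul_sum_sub_mul_pow_sub_le (n N : ℕ) {a : ℕ → α} {X D : α}
    (ha : ∀ m ∈ Icc 1 (N + 1), |a m| ≤ X) (hd : ∀ m ∈ Icc 1 N, |a m - a (m + 1)| ≤ D) :
    |(n + 2) * ∑ m ∈ Icc 1 N, (a m - a (m + 1)) * a m ^ (n + 1)
        - (a 1 ^ (n + 2) - a (N + 1) ^ (n + 2))| ≤ N * ((n + 2) ^ 2 * D ^ 2 * X ^ n) := by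
  have htel : a 1 ^ (n + 2) - a (N + 1) ^ (n + 2) =
      ∑ m ∈ Icc 1 N, (a m ^ (n + 2) - a (m + 1) ^ (n + 2)) := by
    rw [← Ico_add_one_right_eq_Icc, ← neg_sub, ← sum_Ico_sub (fun m ↦ a m ^ (n + 2)) (by omega),
      ← sum_neg_distrib]
    simp only [neg_sub]
  rw [htel, mul_sum, ← sum_sub_distrib]
  refine (abs_sum_le_sum_abs _ _).trans ?_
  calc _ ≤ ∑ m ∈ Icc 1 N, (n + 2) ^ 2 * D ^ 2 * X ^ n := by
        refine sum_le_sum fun m hm ↦ ?_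
        obtain ⟨hm1, hmN⟩ := mem_Icc.mp hm
        have ham : |a m| ≤ X := ha m (mem_Icc.mpr ⟨hm1, by omega⟩)
        have hX : 0 ≤ X := (abs_nonneg _).trans ham
        rw [← mul_assoc]
        refine (abs_mul_sub_mul_pow_sub_sub_pow_le n ham
          (ha (m + 1) (mem_Icc.mpr ⟨by omega, by omega⟩))).trans ?_
        rw [← sq_abs (a m - a (m + 1))]
        gcongr
        exact hd m hm
    _ = _ := by simp

end Telescoping

def defect (x : ℝ) (l m : ℕ) : ℝ := x - m * (m + l)

theorem defect_sub_defect_add_one (x : ℝ) (l m : ℕ) :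
    defect x l m - defect x l (m + 1) = 2 * m + l + 1 := by
  simp only [defect]; push_cast; ring

theorem pow_add_one_mul_pow_eq_mul_defect_pow (x : ℝ) (k l : ℕ) {m : ℕ} (hm : m ≠ 0) :
    (m : ℝ) ^ (k + 1) * (x / (2 * m) - m / 2 - l / 2) ^ k = m * defect x l m ^ k / 2 ^ k := by
  have hm' : (m : ℝ) ≠ 0 := Nat.cast_ne_zero.mpr hm
  have h : x / (2 * m) - m / 2 - l / 2 = defect x l m / (2 * m) := by
    simp only [defect]; field_simp; ring
  rw [h, div_pow, mul_pow, pow_succ]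
  field_simp

theorem two_mul_sum_mul_defect_pow_eq (x : ℝ) (l N k : ℕ) :
    2 * ∑ m ∈ Icc 1 N, (m : ℝ) * defect x l m ^ k =
      ∑ m ∈ Icc 1 N, (defect x l m - defect x l (m + 1)) * defect x l m ^ k
        - (l + 1) * ∑ m ∈ Icc 1 N, defect x l m ^ k := by
  simp only [mul_sum, ← sum_sub_distrib, defect_sub_defect_add_one]
  exact sum_congr rfl fun m _ ↦ by ring

section FloorSqrt

variable {Y : ℝ} {l m : ℕ}

theorem abs_defect_le (hY : l + 3 ≤ Y) (hm : m ∈ Icc 1 (⌊Y⌋₊ + 1)) :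
    |defect (Y ^ 2) l m| ≤ Y ^ 2 := by
  obtain ⟨hm1, hmN⟩ := mem_Icc.mp hm
  have hmY : (m : ℝ) ≤ Y + 1 := by
    have : (m : ℝ) ≤ ⌊Y⌋₊ + 1 := by exact_mod_cast hmN
    linarith [Nat.floor_le (a := Y) (by linarith)]
  have hm0 : (0 : ℝ) ≤ m := m.cast_nonneg
  have hl0 : (0 : ℝ) ≤ l := l.cast_nonneg
  simp only [defect]
  rw [abs_le]
  constructor <;>
    nlinarith [mul_le_mul hmY (add_le_add_right hmY (l : ℝ)) (by positivity) (by linarith)]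

theorem abs_defect_floor_add_one_le (hY : 1 ≤ Y) :
    |defect (Y ^ 2) l (⌊Y⌋₊ + 1)| ≤ (2 * l + 3) * Y := by
  have h1 : (⌊Y⌋₊ : ℝ) ≤ Y := Nat.floor_le (by linarith)
  have h2 : Y < ⌊Y⌋₊ + 1 := Nat.lt_floor_add_one Y
  have hl0 : (0 : ℝ) ≤ l := l.cast_nonneg
  simp only [defect]
  push_cast
  rw [abs_le]
  constructor <;> nlinarith

theorem abs_defect_sub_defect_add_one_le (hY : l + 1 ≤ Y) (hm : m ≤ ⌊Y⌋₊) :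
    |defect (Y ^ 2) l m - defect (Y ^ 2) l (m + 1)| ≤ 3 * Y := by
  have hmY : (m : ℝ) ≤ Y := (Nat.cast_le.mpr hm).trans (Nat.floor_le (by linarith))
  rw [defect_sub_defect_add_one, abs_of_nonneg (by positivity)]
  linarith

end FloorSqrt

theorem abs_two_mul_sum_mul_defect_pow_sub_le (n : ℕ) {Y : ℝ} (hY : n + 5 ≤ Y) :
    |2 * (n + 2) * ∑ m ∈ Icc 1 ⌊Y⌋₊, (m : ℝ) * defect (Y ^ 2) (n + 2) m ^ (n + 1)
        - (Y ^ 2) ^ (n + 2)|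
      ≤ (9 * (n + 2) ^ 2 + 2 * (n + 2) * (n + 3) + (2 * n + 7) ^ (n + 2)) * Y ^ (2 * n + 3) := by
  set N := ⌊Y⌋₊
  set d := defect (Y ^ 2) (n + 2)
  have hY1 : 1 ≤ Y := by linarith [n.cast_nonneg (α := ℝ)]
  have hNY : (N : ℝ) ≤ Y := Nat.floor_le (by linarith)
  have hd : ∀ m ∈ Icc 1 (N + 1), |d m| ≤ Y ^ 2 := fun m hm ↦
    abs_defect_le (by push_cast; linarith) hm
  have hE := abs_mul_sum_sub_mul_pow_sub_le n N hd fun m hm ↦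
    abs_defect_sub_defect_add_one_le (by push_cast; linarith) (mem_Icc.mp hm).2
  have hE' : (N : ℝ) * ((n + 2) ^ 2 * (3 * Y) ^ 2 * (Y ^ 2) ^ n) ≤
      9 * (n + 2) ^ 2 * Y ^ (2 * n + 3) := by
    calc _ ≤ Y * ((n + 2) ^ 2 * (3 * Y) ^ 2 * (Y ^ 2) ^ n) := by gcongr
      _ = _ := by ring
  have hfirst : |d 1 ^ (n + 2) - (Y ^ 2) ^ (n + 2)| ≤ (n + 2) * (n + 3) * Y ^ (2 * n + 3) := by
    have h1 : |d 1 - Y ^ 2| = n + 3 := by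
      simp only [d, defect]; push_cast; rw [abs_of_nonpos (by nlinarith)]; ring
    calc _ ≤ |d 1 - Y ^ 2| * (n + 2 : ℕ) * max |d 1| |Y ^ 2| ^ (n + 1) :=
          abs_pow_sub_pow_le ..
      _ ≤ (n + 3) * (n + 2) * (Y ^ 2) ^ (n + 1) := by
        rw [h1]; push_cast
        gcongr
        exact max_le (hd 1 (by simp)) (abs_of_nonneg (by positivity)).le
      _ ≤ _ := by
        rw [← pow_mul, mul_comm (n + 3 : ℝ)]
        exact mul_le_mul_of_nonneg_left (pow_le_pow_right₀ hY1 (by omega)) (by positivity)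
  have hlast : |d (N + 1) ^ (n + 2)| ≤ (2 * n + 7) ^ (n + 2) * Y ^ (2 * n + 3) := by
    rw [abs_pow]
    calc _ ≤ ((2 * n + 7) * Y) ^ (n + 2) := by
          gcongr; exact (abs_defect_floor_add_one_le hY1).trans_eq (by push_cast; ring)
      _ ≤ _ := by
          rw [mul_pow]
          exact mul_le_mul_of_nonneg_left (pow_le_pow_right₀ hY1 (by omega)) (by positivity)
  have hsum : |∑ m ∈ Icc 1 N, d m ^ (n + 1)| ≤ Y ^ (2 * n + 3) := by
    calc _ ≤ ∑ m ∈ Icc 1 N, (Y ^ 2) ^ (n + 1) := by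
          refine (abs_sum_le_sum_abs _ _).trans (sum_le_sum fun m hm ↦ ?_)
          rw [abs_pow]; gcongr
          exact hd m (by simp at hm ⊢; omega)
      _ ≤ Y * (Y ^ 2) ^ (n + 1) := by simp; gcongr
      _ = _ := by ring
  have hsplit : 2 * (n + 2) * ∑ m ∈ Icc 1 N, (m : ℝ) * d m ^ (n + 1) - (Y ^ 2) ^ (n + 2) =
      ((n + 2) * ∑ m ∈ Icc 1 N, (d m - d (m + 1)) * d m ^ (n + 1)
          - (d 1 ^ (n + 2) - d (N + 1) ^ (n + 2)))
        + (d 1 ^ (n + 2) - (Y ^ 2) ^ (n + 2)) - d (N + 1) ^ (n + 2)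
        - (n + 2) * (n + 3) * ∑ m ∈ Icc 1 N, d m ^ (n + 1) := by
    rw [mul_comm 2, mul_assoc, two_mul_sum_mul_defect_pow_eq]; push_cast; ring
  rw [hsplit]
  have h23 : 0 ≤ ((n : ℝ) + 2) * (n + 3) := by positivity
  have hS := abs_le.mp hsum
  rw [abs_le] at hE hfirst hlast ⊢
  constructor <;> nlinarith [hS.1, hS.2, hE.1, hE.2, hfirst.1, hfirst.2, hlast.1, hlast.2]

/-- `∑_{1 ≤ m ≤ √x} m^l (x/(2m) − m/2 − l/2)^{l−1} = x^l/(2^l l) + O(x^{l−1/2})`. -/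
theorem sum_m_power_l_sub_one (l : ℕ) (hl : 2 ≤ l) :
    ∃ C x₀ : ℝ, 0 < C ∧ 1 ≤ x₀ ∧ ∀ x : ℝ, x₀ ≤ x →
      |(∑ m ∈ Finset.Icc 1 ⌊Real.sqrt x⌋₊,
          (m : ℝ) ^ l * (x / (2 * m) - m / 2 - l / 2) ^ (l - 1)) -
        x ^ (l : ℕ) / (2 ^ l * l)| ≤ C * x ^ ((l : ℝ) - 1/2) := by
  obtain ⟨n, rfl⟩ : ∃ n, l = n + 2 := ⟨l - 2, by omega⟩
  refine ⟨9 * (n + 2) ^ 2 + 2 * (n + 2) * (n + 3) + (2 * n + 7) ^ (n + 2), (n + 5) ^ 2,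
    by positivity, one_le_pow₀ (by linarith [n.cast_nonneg (α := ℝ)]), fun x hx ↦ ?_⟩
  obtain ⟨Y, hY0, rfl⟩ : ∃ Y, 0 ≤ Y ∧ x = Y ^ 2 :=
    ⟨√x, sqrt_nonneg x, (sq_sqrt ((sq_nonneg _).trans hx)).symm⟩
  have hY : n + 5 ≤ Y := by nlinarith
  have hsum : ∑ m ∈ Icc 1 ⌊Y⌋₊, (m : ℝ) ^ (n + 2) *
        (Y ^ 2 / (2 * m) - m / 2 - ((n + 2 : ℕ) : ℝ) / 2) ^ (n + 2 - 1) =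
      (∑ m ∈ Icc 1 ⌊Y⌋₊, (m : ℝ) * defect (Y ^ 2) (n + 2) m ^ (n + 1)) / 2 ^ (n + 1) := by
    rw [sum_div]
    exact sum_congr rfl fun m hm ↦
      pow_add_one_mul_pow_eq_mul_defect_pow _ _ _ (by simp at hm; omega)
  have hrpow : (Y ^ 2) ^ (((n + 2 : ℕ) : ℝ) - 1 / 2) = Y ^ (2 * n + 3) := by
    rw [← rpow_natCast Y 2, ← rpow_mul hY0, ← rpow_natCast]; push_cast; ring_nf
  have hden : (1 : ℝ) ≤ 2 ^ (n + 2) * (n + 2) :=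
    one_le_mul_of_one_le_of_one_le (one_le_pow₀ (by norm_num))
      (by linarith [n.cast_nonneg (α := ℝ)])
  rw [sqrt_sq hY0, hsum, hrpow]
  calc _ = |2 * (n + 2) * ∑ m ∈ Icc 1 ⌊Y⌋₊, (m : ℝ) * defect (Y ^ 2) (n + 2) m ^ (n + 1)
          - (Y ^ 2) ^ (n + 2)| / (2 ^ (n + 2) * (n + 2) : ℝ) := by
        rw [← abs_of_pos (zero_lt_one.trans_le hden), ← abs_div]
        congr 1; push_cast; field_simp; ring
    _ ≤ _ :=
      (div_le_self (abs_nonneg _) hden).trans (abs_two_mul_sum_mul_defect_pow_sub_le n hY)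
end

section
/- For l = 1 and large real x, the counting function N_II(2πx) := ∑_{m ≥ 1, n ≥ 0, m² + m(2n+1) ≤ x} 2m satisfies N_II(2πx) = (2/3)·x^{3/2} − x/2 − ∑_{1 ≤ m ≤ √x} 2m·ψ(x/(2m) − m/2 + 1/2) + O(√x), where ψ(t) = {t} − 1/2. -/
open Real Finset

/-!
For fixed `m ≥ 1` the admissible `n` are those with `n + 1 ≤ (x + m - m²) / (2m)`, so the inner
count is `⌊(x + m - m²) / (2m)⌋`, which vanishes once `m > √x`. Writing `⌊v⌋ = v - {v}`, the
fractional parts are exactly the `ψ`-terms of the statement, and what remains is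
`∑_{m ≤ √x} (x - m²)`. With `s = √x` and `⌊s⌋ = s - θ`, the sum-of-squares formula gives
`∑_{m ≤ s} (s² - m²) - (2/3 s³ - s²/2) = s (θ - θ² - 1/6) + θ (2θ - 1)(θ - 1) / 6`, of size `O(s)`.
-/

lemma card_filter_natCast_add_one_le (v : ℝ) {N : ℕ} (h : ⌊v⌋₊ ≤ N) :
    #((range N).filter fun n : ℕ => (n : ℝ) + 1 ≤ v) = ⌊v⌋₊ := by
  have hrange : (range N).filter (fun n : ℕ => (n : ℝ) + 1 ≤ v) = range ⌊v⌋₊ := by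
    ext n
    have := Nat.le_floor_iff' (a := v) (Nat.succ_ne_zero n)
    push_cast at this
    simp only [mem_filter, mem_range, ← this]
    omega
  rw [hrange, card_range]

lemma natCast_sq_add_mul_le_iff {m : ℕ} (hm : 0 < m) (n : ℕ) (x : ℝ) :
    ((m ^ 2 + m * (2 * n + 1) : ℕ) : ℝ) ≤ x ↔ (n : ℝ) + 1 ≤ (x + m - m ^ 2) / (2 * m) := by
  have hm' : (0 : ℝ) < 2 * m := by positivity
  rw [le_div_iff₀ hm']
  push_cast
  constructor <;> intro h <;> linarith

lemma card_filter_sq_add_mul_le {x : ℝ} (hx : 0 ≤ x) {m : ℕ} (hm : 0 < m) :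
    #{n ∈ range (⌊x⌋₊ + 1) | ((m ^ 2 + m * (2 * n + 1) : ℕ) : ℝ) ≤ x}
      = ⌊(x + m - m ^ 2) / (2 * m)⌋₊ := by
  simp_rw [natCast_sq_add_mul_le_iff hm]
  refine card_filter_natCast_add_one_le _ (Nat.le_succ_of_le (Nat.floor_mono ?_))
  have hm1 : (1 : ℝ) ≤ m := by exact_mod_cast hm
  rw [div_le_iff₀ (by positivity)]
  nlinarith

lemma sum_filter_sq_add_mul_le {x : ℝ} (hx : 0 ≤ x) :
    ∑ p ∈ (Icc 1 ⌊x⌋₊ ×ˢ range (⌊x⌋₊ + 1)).filter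
        (fun p : ℕ × ℕ => ((p.1 ^ 2 + p.1 * (2 * p.2 + 1) : ℕ) : ℝ) ≤ x), (2 * p.1 : ℝ)
      = ∑ m ∈ Icc 1 ⌊x⌋₊, 2 * (m : ℝ) * ⌊(x + m - m ^ 2) / (2 * m)⌋₊ := by
  rw [sum_filter, sum_product]
  refine sum_congr rfl fun m hm => ?_
  dsimp only
  rw [← sum_filter, sum_const, card_filter_sq_add_mul_le hx (mem_Icc.mp hm).1, nsmul_eq_mul,
    mul_comm]

lemma floor_div_eq_zero_of_sqrt_lt {x : ℝ} {m : ℕ} (h : √x < m) :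
    ⌊(x + m - m ^ 2) / (2 * m)⌋₊ = 0 := by
  have hm : (0 : ℝ) < m := (sqrt_nonneg x).trans_lt h
  have hxm : x < (m : ℝ) ^ 2 := (sqrt_lt' hm).mp h
  rw [Nat.floor_eq_zero, div_lt_one (by positivity)]
  linarith

lemma two_mul_floor_div_eq {x : ℝ} {m : ℕ} (hm : 0 < m) (hmx : (m : ℝ) ^ 2 ≤ x) :
    2 * (m : ℝ) * ⌊(x + m - m ^ 2) / (2 * m)⌋₊
      = x + m - m ^ 2 - 2 * m * Int.fract (x / (2 * m) - m / 2 + 1 / 2) := by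
  have hm' : (0 : ℝ) < 2 * m := by positivity
  have harg : (x + m - m ^ 2) / (2 * m) = x / (2 * m) - m / 2 + 1 / 2 := by
    field_simp; ring
  rw [natCast_floor_eq_intCast_floor (div_nonneg (by linarith) hm'.le), ← Int.self_sub_fract,
    harg]
  field_simp
  ring

lemma sum_two_mul_floor_div_eq {x : ℝ} (hx : 0 ≤ x) :
    ∑ m ∈ Icc 1 ⌊x⌋₊, 2 * (m : ℝ) * ⌊(x + m - m ^ 2) / (2 * m)⌋₊
      = ∑ m ∈ Icc 1 ⌊√x⌋₊, (x + m - m ^ 2 - 2 * m * Int.fract (x / (2 * m) - m / 2 + 1 / 2)) := by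
  have hmem {m : ℕ} (hm : m ∈ Icc 1 ⌊√x⌋₊) : 0 < m ∧ (m : ℝ) ^ 2 ≤ x := by
    obtain ⟨hm1, hmK⟩ := mem_Icc.mp hm
    exact ⟨hm1, (le_sqrt (Nat.cast_nonneg m) hx).mp ((Nat.le_floor_iff (sqrt_nonneg x)).mp hmK)⟩
  have hsub : Icc 1 ⌊√x⌋₊ ⊆ Icc 1 ⌊x⌋₊ := fun m hm => by
    obtain ⟨hm1, hmx⟩ := hmem hm
    refine mem_Icc.mpr ⟨hm1, Nat.le_floor ?_⟩
    have : (1 : ℝ) ≤ m := by exact_mod_cast hm1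
    nlinarith
  rw [← sum_subset hsub fun m hm hmK => ?_]
  · exact sum_congr rfl fun m hm => two_mul_floor_div_eq (hmem hm).1 (hmem hm).2
  · have hKm : ⌊√x⌋₊ < m := by
      simp only [mem_Icc, not_and_or, not_le] at hm hmK
      omega
    rw [floor_div_eq_zero_of_sqrt_lt ((Nat.floor_lt (sqrt_nonneg x)).mp hKm), Nat.cast_zero,
      mul_zero]

lemma sum_Icc_sq (K : ℕ) : ∑ m ∈ Icc 1 K, (m : ℝ) ^ 2 = K * (K + 1) * (2 * K + 1) / 6 := by
  induction K with
  | zero => simp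
  | succ n ih =>
    rw [sum_Icc_succ_top (by omega), ih]
    push_cast; ring

lemma abs_sum_Icc_sq_sub_sq_sub_le {s : ℝ} (hs : 0 ≤ s) :
    |∑ m ∈ Icc 1 ⌊s⌋₊, (s ^ 2 - (m : ℝ) ^ 2) - (2 / 3 * s ^ 3 - s ^ 2 / 2)| ≤ s := by
  rw [sum_sub_distrib, sum_Icc_sq, sum_const, Nat.card_Icc, nsmul_eq_mul, add_tsub_cancel_right]
  set θ := Int.fract s
  have hK : (⌊s⌋₊ : ℝ) = s - θ := by rw [natCast_floor_eq_intCast_floor hs, Int.self_sub_fract]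
  have hθ0 := Int.fract_nonneg s
  have hθ1 := Int.fract_lt_one s
  rw [hK, abs_le]
  constructor <;> nlinarith [mul_nonneg hθ0 (sub_nonneg.2 hθ1.le), mul_nonneg hs hθ0]

/-- For the 3-dimensional Heisenberg manifold (`l = 1`):
`N_II(2πx) = (2/3)x^{3/2} − x/2 − ∑_{1 ≤ m ≤ √x} 2m ψ(x/(2m) − m/2 + 1/2) + O(√x)`,
where `N_II(2πx) = ∑_{m ≥ 1, n ≥ 0, m² + m(2n+1) ≤ x} 2m` and `ψ(t) = {t} − 1/2`. -/
theorem NII_asymptotic_l_eq_one :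
    ∃ C x₀ : ℝ, 0 < C ∧ 1 ≤ x₀ ∧ ∀ x : ℝ, x₀ ≤ x →
      |(∑ p ∈ (Finset.Icc 1 ⌊x⌋₊ ×ˢ Finset.range (⌊x⌋₊ + 1)).filter
            (fun p : ℕ × ℕ => ((p.1 ^ 2 + p.1 * (2 * p.2 + 1) : ℕ) : ℝ) ≤ x),
          (2 * p.1 : ℝ)) -
        ((2/3) * x ^ ((3:ℝ)/2) - x / 2 -
          ∑ m ∈ Finset.Icc 1 ⌊Real.sqrt x⌋₊,
            2 * (m : ℝ) * (Int.fract (x / (2 * m) - m / 2 + 1/2) - 1/2))|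
        ≤ C * Real.sqrt x := by
  refine ⟨1, 1, one_pos, le_rfl, fun x hx => ?_⟩
  have hx0 : 0 ≤ x := zero_le_one.trans hx
  have hsq : √x ^ 2 = x := sq_sqrt hx0
  have hcube : x ^ ((3 : ℝ) / 2) = √x ^ 3 := by
    rw [sqrt_eq_rpow, ← rpow_natCast, ← rpow_mul hx0]
    norm_num
  rw [sum_filter_sq_add_mul_le hx0, sum_two_mul_floor_div_eq hx0, one_mul, hcube]
  convert abs_sum_Icc_sq_sub_sq_sub_le (sqrt_nonneg x) using 2
  rw [hsq, sub_sub_eq_add_sub, ← sum_add_distrib]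
  congr 1
  exact sum_congr rfl fun m _ => by ring
end
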